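/- Let A be strictly positive and let T1, T2, T3, T4 be bounded linear operators on H each admitting an A-adjoint (i.e. for each i there exists S_i with A∘S_i = T_i*∘A). Then w_B([[T1,T2],[T3,T4]]) ≤ max{w_A(T1), w_A(T4)} + (w_A(T2 + T3) + w_A(T2 - T3))/2. -/

import Mathlib

open scoped InnerProductSpace
open ContinuousLinearMap

variable {H : Type*} [NormedAddCommGroup H] [InnerProductSpace ℂ H] [CompleteSpace H]

/-- The `A`-seminorm `‖x‖_A = √⟨Ax,x⟩`. -/
noncomputable def aNorm (A : H →L[ℂ] H) (x : H) : ℝ :=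
  Real.sqrt (⟪A x, x⟫_ℂ).re

/-- The `A`-numerical radius `w_A(T) = sup {|⟨ATx,x⟩| : x ∈ H, ‖x‖_A = 1}`. -/
noncomputable def wA (A T : H →L[ℂ] H) : ℝ :=
  sSup {r : ℝ | ∃ x : H, aNorm A x = 1 ∧ r = ‖⟪A (T x), x⟫_ℂ‖}

/-- The `A`-operator seminorm `‖T‖_A = sup {‖Tx‖_A : x ∈ closure (range A), ‖x‖_A = 1}`. -/
noncomputable def aOpNorm (A T : H →L[ℂ] H) : ℝ :=
  sSup {r : ℝ | ∃ x : H, x ∈ closure (Set.range (⇑A)) ∧ aNorm A x = 1 ∧ r = aNorm A (T x)}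

/-- The `B`-numerical radius of the operator matrix `[[T1,T2],[T3,T4]]` acting on `H ⊕ H` by
`(x, y) ↦ (T1 x + T2 y, T3 x + T4 y)`, where `B = [[A,0],[0,A]]`:
`w_B(T) = sup {|⟨BTz,z⟩| : z ∈ H ⊕ H, ‖z‖_B = 1}`. -/
noncomputable def wB (A T1 T2 T3 T4 : H →L[ℂ] H) : ℝ :=
  sSup {r : ℝ | ∃ x y : H, Real.sqrt ((⟪A x, x⟫_ℂ).re + (⟪A y, y⟫_ℂ).re) = 1 ∧
    r = ‖⟪A (T1 x + T2 y), x⟫_ℂ + ⟪A (T3 x + T4 y), y⟫_ℂ‖}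

open Filter Topology

/-!
The off-diagonal part of `⟨BTz, z⟩`, for `z = (x, y)`, is `⟨T₂y, x⟩_A + ⟨T₃x, y⟩_A`, which
polarizes into the quadratic forms of `T₂ + T₃` at `x ± y` and of `T₂ - T₃` at `x ± iy`; the
parallelogram law turns the four numerical-radius bounds into `(w_A(T₂+T₃) + w_A(T₂-T₃))/2`.
The diagonal part is bounded by `max (w_A T₁) (w_A T₄)`. For these bounds the suprema
defining `w_A` must be finite: if `AS = T*A` then `R = ST` is `A`-symmetric, so
`n ↦ ‖Rⁿx‖_A` is log-convex and grows at most like `‖R‖ⁿ`, whence `‖Rx‖_A ≤ ‖R‖ ‖x‖_A` and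
`‖Tx‖_A² = ⟨Rx, x⟩_A ≤ ‖R‖ ‖x‖_A²`.
-/

theorem le_of_forall_pow_le_mul_pow {a b M : ℝ} (hb : 0 ≤ b) (h : ∀ n : ℕ, a ^ n ≤ M * b ^ n) :
    a ≤ b := by
  by_contra! hba
  have ha : 0 < a := hb.trans_lt hba
  have hlim : Tendsto (fun n : ℕ => M * (b / a) ^ n) atTop (𝓝 0) := by
    simpa using (tendsto_pow_atTop_nhds_zero_of_lt_one (div_nonneg hb ha.le)
      ((div_lt_one ha).2 hba)).const_mul M
  obtain ⟨n, hn⟩ := (hlim.eventually (gt_mem_nhds one_pos)).exists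
  have : 1 ≤ M * (b / a) ^ n := by
    rw [div_pow, ← mul_div_assoc, le_div_iff₀ (pow_pos ha n), one_mul]
    exact h n
  linarith

theorem le_mul_of_sq_le_mul_of_le_mul_pow {c : ℕ → ℝ} {b M : ℝ} (hc : ∀ n, 0 ≤ c n)
    (hb : 0 ≤ b) (hconv : ∀ n, c (n + 1) ^ 2 ≤ c n * c (n + 2))
    (hgrowth : ∀ n, c n ≤ M * b ^ n) : c 1 ≤ b * c 0 := by
  have hratio : ∀ n, c 1 * c n ≤ c 0 * c (n + 1) := by
    intro n
    induction n with
    | zero => rw [mul_comm]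
    | succ n ih =>
      rcases (hc n).eq_or_lt with hn | hn
      · have : c (n + 1) = 0 := by nlinarith [hconv n, hc (n + 1), hc (n + 2)]
        rw [this, mul_zero]
        exact mul_nonneg (hc 0) (hc _)
      · refine le_of_mul_le_mul_right ?_ hn
        nlinarith [mul_le_mul_of_nonneg_right ih (hc (n + 1)),
          mul_le_mul_of_nonneg_left (hconv n) (hc 0)]
  have hpow : ∀ n, c 1 ^ n * c 0 ≤ c 0 ^ n * c n := by
    intro n
    induction n with
    | zero => simp
    | succ n ih =>
      calc c 1 ^ (n + 1) * c 0 = c 1 * (c 1 ^ n * c 0) := by ring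
        _ ≤ c 1 * (c 0 ^ n * c n) := mul_le_mul_of_nonneg_left ih (hc 1)
        _ = c 0 ^ n * (c 1 * c n) := by ring
        _ ≤ c 0 ^ n * (c 0 * c (n + 1)) :=
          mul_le_mul_of_nonneg_left (hratio n) (pow_nonneg (hc 0) n)
        _ = c 0 ^ (n + 1) * c (n + 1) := by ring
  rcases (hc 0).eq_or_lt with h0 | h0
  · rw [← h0, mul_zero]
    nlinarith [hconv 0, hc 1, hc 2]
  · refine le_of_forall_pow_le_mul_pow (M := M / c 0) (mul_nonneg hb h0.le) fun n => ?_
    rw [mul_pow, div_mul_eq_mul_div, le_div_iff₀ h0]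
    calc c 1 ^ n * c 0 ≤ c 0 ^ n * c n := hpow n
      _ ≤ c 0 ^ n * (M * b ^ n) := mul_le_mul_of_nonneg_left (hgrowth n) (pow_nonneg h0.le n)
      _ = M * (b ^ n * c 0 ^ n) := by ring

theorem ContinuousLinearMap.norm_pow_apply_le {𝕜 E : Type*} [NontriviallyNormedField 𝕜]
    [SeminormedAddCommGroup E] [NormedSpace 𝕜 E] (R : E →L[𝕜] E) (x : E) (n : ℕ) :
    ‖(R ^ n) x‖ ≤ ‖R‖ ^ n * ‖x‖ := by
  induction n with
  | zero => simp
  | succ n ih =>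
    rw [pow_succ', mul_apply_eq_comp, pow_succ', mul_assoc]
    exact (R.le_opNorm _).trans (mul_le_mul_of_nonneg_left ih (norm_nonneg R))

section ASemiInner

variable {E : Type*} [NormedAddCommGroup E] [InnerProductSpace ℂ E] {A : E →L[ℂ] E}

@[reducible] noncomputable def aInnerCore (hA : A.IsPositive) : PreInnerProductSpace.Core ℂ E where
  inner x y := ⟪A x, y⟫_ℂ
  conj_inner_symm x y := by rw [hA.inner_left_eq_inner_right, inner_conj_symm]
  re_inner_nonneg x := hA.re_inner_nonneg_left x
  add_left x y z := by rw [map_add, inner_add_left]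
  smul_left x y r := by rw [map_smul, inner_smul_left]

theorem norm_inner_le_aNorm_mul_aNorm (hA : A.IsPositive) (x y : E) :
    ‖⟪A x, y⟫_ℂ‖ ≤ aNorm A x * aNorm A y :=
  InnerProductSpace.Core.norm_inner_le_norm (c := aInnerCore hA) x y

theorem aNorm_nonneg (x : E) : 0 ≤ aNorm A x := Real.sqrt_nonneg _

theorem aNorm_sq (hA : A.IsPositive) (x : E) : aNorm A x ^ 2 = (⟪A x, x⟫_ℂ).re :=
  Real.sq_sqrt (hA.re_inner_nonneg_left x)

theorem inner_smul_smul_self (A : E →L[ℂ] E) (c : ℂ) (x y : E) :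
    ⟪A (c • x), c • y⟫_ℂ = (‖c‖ ^ 2 : ℝ) * ⟪A x, y⟫_ℂ := by
  rw [map_smul, inner_smul_left, inner_smul_right, ← mul_assoc, Complex.conj_mul',
    Complex.ofReal_pow]

theorem aNorm_smul (c : ℂ) (x : E) : aNorm A (c • x) = ‖c‖ * aNorm A x := by
  rw [aNorm, inner_smul_smul_self, Complex.re_ofReal_mul, Real.sqrt_mul (sq_nonneg _),
    Real.sqrt_sq (norm_nonneg c), aNorm]

theorem aNorm_le_sqrt_norm_mul_norm (x : E) : aNorm A x ≤ √‖A‖ * ‖x‖ := by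
  rw [← Real.sqrt_sq (norm_nonneg x), ← Real.sqrt_mul (norm_nonneg A)]
  refine Real.sqrt_le_sqrt ((Complex.re_le_norm _).trans ?_)
  calc ‖⟪A x, x⟫_ℂ‖ ≤ ‖A x‖ * ‖x‖ := norm_inner_le_norm _ _
    _ ≤ ‖A‖ * ‖x‖ * ‖x‖ := mul_le_mul_of_nonneg_right (A.le_opNorm x) (norm_nonneg x)
    _ = ‖A‖ * ‖x‖ ^ 2 := by ring

theorem aNorm_apply_le_of_aSymmetric (hA : A.IsPositive) {R : E →L[ℂ] E}
    (hR : ∀ u v, ⟪A (R u), v⟫_ℂ = ⟪A u, R v⟫_ℂ) (x : E) : aNorm A (R x) ≤ ‖R‖ * aNorm A x := by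
  have hconv : ∀ n, aNorm A ((R ^ (n + 1)) x) ^ 2 ≤
      aNorm A ((R ^ n) x) * aNorm A ((R ^ (n + 2)) x) := by
    intro n
    have hshift :
        ⟪A ((R ^ (n + 1)) x), (R ^ (n + 1)) x⟫_ℂ = ⟪A ((R ^ (n + 2)) x), (R ^ n) x⟫_ℂ := by
      simp only [pow_succ', mul_apply_eq_comp, hR]
    rw [aNorm_sq hA, hshift, mul_comm]
    exact (Complex.re_le_norm _).trans (norm_inner_le_aNorm_mul_aNorm hA _ _)
  have hgrowth : ∀ n, aNorm A ((R ^ n) x) ≤ √‖A‖ * ‖x‖ * ‖R‖ ^ n := fun n =>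
    calc aNorm A ((R ^ n) x) ≤ √‖A‖ * ‖(R ^ n) x‖ := aNorm_le_sqrt_norm_mul_norm _
      _ ≤ √‖A‖ * (‖R‖ ^ n * ‖x‖) :=
        mul_le_mul_of_nonneg_left (R.norm_pow_apply_le x n) (Real.sqrt_nonneg _)
      _ = √‖A‖ * ‖x‖ * ‖R‖ ^ n := by ring
  simpa using le_mul_of_sq_le_mul_of_le_mul_pow (fun n => aNorm_nonneg _) (norm_nonneg R)
    hconv hgrowth

theorem wA_nonneg (A T : E →L[ℂ] E) : 0 ≤ wA A T :=
  Real.sSup_nonneg fun _ ⟨_, _, hr⟩ => hr ▸ norm_nonneg _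

theorem wB_le_of_forall_le {T1 T2 T3 T4 : E →L[ℂ] E} {C : ℝ} (hC : 0 ≤ C)
    (h : ∀ x y, ‖⟪A (T1 x + T2 y), x⟫_ℂ + ⟪A (T3 x + T4 y), y⟫_ℂ‖ ≤
      C * ((⟪A x, x⟫_ℂ).re + (⟪A y, y⟫_ℂ).re)) :
    wB A T1 T2 T3 T4 ≤ C := by
  refine Real.sSup_le (fun _ ⟨x, y, hxy, hr⟩ => ?_) hC
  rw [hr, ← mul_one C, ← Real.sqrt_eq_one.1 hxy]
  exact h x y

open Complex in
theorem inner_add_inner_eq_polarization (A T T' : E →L[ℂ] E) (x y : E) :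
    ⟪A (T y), x⟫_ℂ + ⟪A (T' x), y⟫_ℂ =
      (⟪A ((T + T') (x + y)), x + y⟫_ℂ - ⟪A ((T + T') (x - y)), x - y⟫_ℂ
        + I * ⟪A ((T - T') (x + I • y)), x + I • y⟫_ℂ
        - I * ⟪A ((T - T') (x - I • y)), x - I • y⟫_ℂ) / 4 := by
  simp only [add_apply, sub_apply, map_add, map_sub, map_smul, inner_add_left, inner_add_right,
    inner_sub_left, inner_sub_right, inner_smul_left, inner_smul_right, conj_I]
  ring_nf
  simp only [I_sq]
  ring

theorem re_inner_add_smul_add_re_inner_sub_smul (A : E →L[ℂ] E) (c : ℂ) (x y : E) :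
    (⟪A (x + c • y), x + c • y⟫_ℂ).re + (⟪A (x - c • y), x - c • y⟫_ℂ).re =
      2 * ((⟪A x, x⟫_ℂ).re + ‖c‖ ^ 2 * (⟪A y, y⟫_ℂ).re) := by
  have h : ⟪A (x + c • y), x + c • y⟫_ℂ + ⟪A (x - c • y), x - c • y⟫_ℂ =
      (2 : ℝ) * (⟪A x, x⟫_ℂ + ⟪A (c • y), c • y⟫_ℂ) := by
    simp only [map_add, map_sub, inner_add_left, inner_add_right, inner_sub_left,
      inner_sub_right]
    push_cast
    ring
  rw [inner_smul_smul_self] at h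
  simpa only [Complex.add_re, Complex.re_ofReal_mul] using congrArg Complex.re h

end ASemiInner

section AAdjoint

variable {E : Type*} [NormedAddCommGroup E] [InnerProductSpace ℂ E] [CompleteSpace E]
  {A T T' : E →L[ℂ] E}

def HasAAdjoint (A T : E →L[ℂ] E) : Prop :=
  ∃ S : E →L[ℂ] E, A ∘L S = adjoint T ∘L A

theorem HasAAdjoint.add (hT : HasAAdjoint A T) (hT' : HasAAdjoint A T') :
    HasAAdjoint A (T + T') := by
  obtain ⟨S, hS⟩ := hT
  obtain ⟨S', hS'⟩ := hT'
  exact ⟨S + S', by rw [comp_add, hS, hS', map_add, add_comp]⟩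

theorem HasAAdjoint.sub (hT : HasAAdjoint A T) (hT' : HasAAdjoint A T') :
    HasAAdjoint A (T - T') := by
  obtain ⟨S, hS⟩ := hT
  obtain ⟨S', hS'⟩ := hT'
  exact ⟨S - S', by rw [comp_sub, hS, hS', map_sub, sub_comp]⟩

theorem HasAAdjoint.exists_aNorm_apply_le (hA : A.IsPositive) (hT : HasAAdjoint A T) :
    ∃ C, ∀ x, aNorm A (T x) ≤ C * aNorm A x := by
  obtain ⟨S, hS⟩ := hT
  have hAS (w : E) : A (S w) = adjoint T (A w) := congr($hS w)
  have hST (u v : E) : ⟪A (S (T u)), v⟫_ℂ = ⟪A (T u), T v⟫_ℂ := by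
    rw [hAS, adjoint_inner_left]
  have hsymm (u v : E) : ⟪A ((S ∘L T) u), v⟫_ℂ = ⟪A u, (S ∘L T) v⟫_ℂ := by
    rw [comp_apply, comp_apply, hST, hA.inner_left_eq_inner_right u, hAS, adjoint_inner_right,
      ← hA.inner_left_eq_inner_right]
  refine ⟨√‖S ∘L T‖, fun x => ?_⟩
  have hsq : aNorm A (T x) ^ 2 ≤ ‖S ∘L T‖ * aNorm A x ^ 2 :=
    calc aNorm A (T x) ^ 2 = (⟪A ((S ∘L T) x), x⟫_ℂ).re := by
          rw [aNorm_sq hA, comp_apply, hST]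
      _ ≤ aNorm A ((S ∘L T) x) * aNorm A x :=
        (Complex.re_le_norm _).trans (norm_inner_le_aNorm_mul_aNorm hA _ _)
      _ ≤ ‖S ∘L T‖ * aNorm A x * aNorm A x :=
        mul_le_mul_of_nonneg_right (aNorm_apply_le_of_aSymmetric hA hsymm x) (aNorm_nonneg x)
      _ = ‖S ∘L T‖ * aNorm A x ^ 2 := by ring
  refine (pow_le_pow_iff_left₀ (aNorm_nonneg _)
    (mul_nonneg (Real.sqrt_nonneg _) (aNorm_nonneg x)) two_ne_zero).1 ?_
  rwa [mul_pow, Real.sq_sqrt (norm_nonneg _)]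

theorem norm_inner_le_wA_mul (hA : A.IsPositive) (hT : HasAAdjoint A T) (x : E) :
    ‖⟪A (T x), x⟫_ℂ‖ ≤ wA A T * (⟪A x, x⟫_ℂ).re := by
  obtain ⟨C, hC⟩ := hT.exists_aNorm_apply_le hA
  have hbdd : BddAbove {r : ℝ | ∃ x : E, aNorm A x = 1 ∧ r = ‖⟪A (T x), x⟫_ℂ‖} := by
    refine ⟨C, fun _ ⟨y, hy, hr⟩ => hr ▸ ?_⟩
    calc ‖⟪A (T y), y⟫_ℂ‖ ≤ aNorm A (T y) * aNorm A y :=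
          norm_inner_le_aNorm_mul_aNorm hA _ _
      _ ≤ C * aNorm A y * aNorm A y := mul_le_mul_of_nonneg_right (hC y) (aNorm_nonneg y)
      _ = C := by rw [hy, mul_one, mul_one]
  rw [← aNorm_sq hA]
  rcases (aNorm_nonneg x).eq_or_lt with h0 | hpos
  · calc ‖⟪A (T x), x⟫_ℂ‖ ≤ aNorm A (T x) * aNorm A x :=
          norm_inner_le_aNorm_mul_aNorm hA _ _
      _ = wA A T * aNorm A x ^ 2 := by rw [← h0]; ring
  · set c : ℂ := (((aNorm A x)⁻¹ : ℝ) : ℂ)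
    have hc : ‖c‖ = (aNorm A x)⁻¹ := by
      rw [Complex.norm_real, Real.norm_of_nonneg (inv_nonneg.2 hpos.le)]
    have hunit : aNorm A (c • x) = 1 := by rw [aNorm_smul, hc, inv_mul_cancel₀ hpos.ne']
    have hle := le_csSup hbdd ⟨c • x, hunit, rfl⟩
    rw [map_smul, inner_smul_smul_self, norm_mul, Complex.norm_real, Real.norm_of_nonneg
      (sq_nonneg _), hc, inv_pow, inv_mul_le_iff₀ (pow_pos hpos 2)] at hle
    rwa [mul_comm] at hle

theorem norm_inner_add_inner_le (hA : A.IsPositive) (hS : HasAAdjoint A (T + T'))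
    (hD : HasAAdjoint A (T - T')) (x y : E) :
    ‖⟪A (T y), x⟫_ℂ + ⟪A (T' x), y⟫_ℂ‖ ≤
      (wA A (T + T') + wA A (T - T')) / 2 * ((⟪A x, x⟫_ℂ).re + (⟪A y, y⟫_ℂ).re) := by
  set a := ⟪A ((T + T') (x + y)), x + y⟫_ℂ
  set b := ⟪A ((T + T') (x - y)), x - y⟫_ℂ
  set c := ⟪A ((T - T') (x + Complex.I • y)), x + Complex.I • y⟫_ℂ
  set d := ⟪A ((T - T') (x - Complex.I • y)), x - Complex.I • y⟫_ℂ
  have htri : ‖a - b + Complex.I * c - Complex.I * d‖ ≤ ‖a‖ + ‖b‖ + ‖c‖ + ‖d‖ := by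
    calc ‖a - b + Complex.I * c - Complex.I * d‖
        ≤ ‖a - b‖ + ‖Complex.I * c‖ + ‖Complex.I * d‖ :=
          (norm_sub_le _ _).trans (add_le_add_left (norm_add_le _ _) _)
      _ ≤ ‖a‖ + ‖b‖ + ‖c‖ + ‖d‖ := by
          rw [norm_mul, norm_mul, Complex.norm_I, one_mul, one_mul]
          linarith [norm_sub_le a b]
  have hreal : 2 * wA A (T + T') * ((⟪A x, x⟫_ℂ).re + (⟪A y, y⟫_ℂ).re) =
      wA A (T + T') * (⟪A (x + y), x + y⟫_ℂ).re +
        wA A (T + T') * (⟪A (x - y), x - y⟫_ℂ).re := by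
    have := re_inner_add_smul_add_re_inner_sub_smul A 1 x y
    rw [one_smul, norm_one, one_pow, one_mul] at this
    rw [← mul_add, this]
    ring
  have himag : 2 * wA A (T - T') * ((⟪A x, x⟫_ℂ).re + (⟪A y, y⟫_ℂ).re) =
      wA A (T - T') * (⟪A (x + Complex.I • y), x + Complex.I • y⟫_ℂ).re +
        wA A (T - T') * (⟪A (x - Complex.I • y), x - Complex.I • y⟫_ℂ).re := by
    rw [← mul_add, re_inner_add_smul_add_re_inner_sub_smul, Complex.norm_I, one_pow, one_mul]
    ring
  rw [inner_add_inner_eq_polarization, norm_div, Complex.norm_ofNat]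
  linarith [norm_inner_le_wA_mul hA hS (x + y), norm_inner_le_wA_mul hA hS (x - y),
    norm_inner_le_wA_mul hA hD (x + Complex.I • y),
    norm_inner_le_wA_mul hA hD (x - Complex.I • y)]

end AAdjoint

theorem stmt6_general (A T1 T2 T3 T4 : H →L[ℂ] H) (hA : A.IsPositive)
    (h1 : ∃ S : H →L[ℂ] H, A ∘L S = (ContinuousLinearMap.adjoint T1) ∘L A)
    (h2 : ∃ S : H →L[ℂ] H, A ∘L S = (ContinuousLinearMap.adjoint T2) ∘L A)
    (h3 : ∃ S : H →L[ℂ] H, A ∘L S = (ContinuousLinearMap.adjoint T3) ∘L A)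
    (h4 : ∃ S : H →L[ℂ] H, A ∘L S = (ContinuousLinearMap.adjoint T4) ∘L A) :
    wB A T1 T2 T3 T4 ≤
      max (wA A T1) (wA A T4) + (wA A (T2 + T3) + wA A (T2 - T3)) / 2 := by
  have hmax : 0 ≤ max (wA A T1) (wA A T4) := (wA_nonneg A T1).trans (le_max_left _ _)
  refine wB_le_of_forall_le (by linarith [wA_nonneg A (T2 + T3), wA_nonneg A (T2 - T3)])
    fun x y => ?_
  have hx := hA.re_inner_nonneg_left x
  have hy := hA.re_inner_nonneg_left y
  have hdiag : ‖⟪A (T1 x), x⟫_ℂ‖ + ‖⟪A (T4 y), y⟫_ℂ‖ ≤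
      max (wA A T1) (wA A T4) * ((⟪A x, x⟫_ℂ).re + (⟪A y, y⟫_ℂ).re) := by
    rw [mul_add]
    gcongr
    · exact (norm_inner_le_wA_mul hA h1 x).trans (by gcongr; exact le_max_left _ _)
    · exact (norm_inner_le_wA_mul hA h4 y).trans (by gcongr; exact le_max_right _ _)
  have hcross :=
    norm_inner_add_inner_le hA (HasAAdjoint.add h2 h3) (HasAAdjoint.sub h2 h3) x y
  calc ‖⟪A (T1 x + T2 y), x⟫_ℂ + ⟪A (T3 x + T4 y), y⟫_ℂ‖
      = ‖⟪A (T1 x), x⟫_ℂ + ⟪A (T4 y), y⟫_ℂ + (⟪A (T2 y), x⟫_ℂ + ⟪A (T3 x), y⟫_ℂ)‖ := by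
        rw [map_add, map_add, inner_add_left, inner_add_left]
        ring_nf
    _ ≤ ‖⟪A (T1 x), x⟫_ℂ‖ + ‖⟪A (T4 y), y⟫_ℂ‖ + ‖⟪A (T2 y), x⟫_ℂ + ⟪A (T3 x), y⟫_ℂ‖ :=
        (norm_add_le _ _).trans (add_le_add_left (norm_add_le _ _) _)
    _ ≤ _ := by linarith

theorem stmt6 (A T1 T2 T3 T4 : H →L[ℂ] H) (hA : A.IsPositive) (hA' : ∀ x : H, x ≠ 0 → 0 < (⟪A x, x⟫_ℂ).re)
    (h1 : ∃ S : H →L[ℂ] H, A ∘L S = (ContinuousLinearMap.adjoint T1) ∘L A)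
    (h2 : ∃ S : H →L[ℂ] H, A ∘L S = (ContinuousLinearMap.adjoint T2) ∘L A)
    (h3 : ∃ S : H →L[ℂ] H, A ∘L S = (ContinuousLinearMap.adjoint T3) ∘L A)
    (h4 : ∃ S : H →L[ℂ] H, A ∘L S = (ContinuousLinearMap.adjoint T4) ∘L A) :
    wB A T1 T2 T3 T4 ≤
      max (wA A T1) (wA A T4) + (wA A (T2 + T3) + wA A (T2 - T3)) / 2 :=
  stmt6_general A T1 T2 T3 T4 hA h1 h2 h3 h4
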